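/- Let h > 0, λ ∈ ℝ, and let x_j = a + j h be uniform knots. The extended cubic B-spline E_i is twice continuously differentiable on ℝ: E_i, E_i′ and E_i″ exist everywhere and are continuous (i.e., E_i is of class C² on ℝ). -/

import Mathlib

/-!
Between consecutive knots `E_i` is a polynomial, and its consecutive pieces differ by multiples
of `(x - x_j)³` and `(x - x_j)⁴`. Hence `E_i` is a fixed linear combination of the truncated
powers `(x - x_j)₊³` and `(x - x_j)₊⁴`, `j = i - 2, …, i + 2` (which vanishes identically beyond
`x_{i+2}`), and `(x - c)₊^(n+1)` is `Cⁿ` since its derivative is `(n + 1) (x - c)₊ⁿ`.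
-/

/-- The uniform knots `x_j = a + j h`. -/
noncomputable def knot (a h : ℝ) (j : ℤ) : ℝ := a + (j : ℝ) * h

/-- The extended cubic B-spline with free parameter `lam`, centered at the knot
`x_i = a + i h` of the uniform knot sequence with spacing `h`. -/
noncomputable def extCubicBSpline (a h lam : ℝ) (i : ℤ) (x : ℝ) : ℝ :=
  (1 / (24 * h ^ 4)) *
    (if x ∈ Set.Icc (knot a h (i - 2)) (knot a h (i - 1)) then
        4 * h * (1 - lam) * (x - knot a h (i - 2)) ^ 3 + 3 * lam * (x - knot a h (i - 2)) ^ 4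
      else if x ∈ Set.Icc (knot a h (i - 1)) (knot a h i) then
        (4 - lam) * h ^ 4 + 12 * h ^ 3 * (x - knot a h (i - 1))
          + 6 * h ^ 2 * (2 + lam) * (x - knot a h (i - 1)) ^ 2
          - 12 * h * (x - knot a h (i - 1)) ^ 3 - 3 * lam * (x - knot a h (i - 1)) ^ 4
      else if x ∈ Set.Icc (knot a h i) (knot a h (i + 1)) then
        (4 - lam) * h ^ 4 - 12 * h ^ 3 * (x - knot a h (i + 1))
          + 6 * h ^ 2 * (2 + lam) * (x - knot a h (i + 1)) ^ 2
          + 12 * h * (x - knot a h (i + 1)) ^ 3 - 3 * lam * (x - knot a h (i + 1)) ^ 4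
      else if x ∈ Set.Icc (knot a h (i + 1)) (knot a h (i + 2)) then
        4 * h * (lam - 1) * (x - knot a h (i + 2)) ^ 3 + 3 * lam * (x - knot a h (i + 2)) ^ 4
      else 0)

open Set Topology

noncomputable def truncPow (c : ℝ) (k : ℕ) (x : ℝ) : ℝ := max (x - c) 0 ^ k

lemma continuous_truncPow (c : ℝ) (k : ℕ) : Continuous (truncPow c k) := by
  unfold truncPow; fun_prop

lemma truncPow_of_le {c x : ℝ} (k : ℕ) (hx : x ≤ c) : truncPow c (k + 1) x = 0 := by
  simp [truncPow, max_eq_right (sub_nonpos.2 hx)]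

lemma truncPow_of_ge {c x : ℝ} (k : ℕ) (hx : c ≤ x) : truncPow c k x = (x - c) ^ k := by
  rw [truncPow, max_eq_left (sub_nonneg.2 hx)]

lemma hasDerivAt_truncPow_of_ne (c : ℝ) (n : ℕ) {y : ℝ} (hy : y ≠ c) :
    HasDerivAt (truncPow c (n + 2)) ((n + 2) * truncPow c (n + 1) y) y := by
  rcases hy.lt_or_gt with hy | hy
  · have h0 : truncPow c (n + 2) =ᶠ[𝓝 y] fun _ => 0 := by
      filter_upwards [Iio_mem_nhds hy] with t ht
      simp [truncPow, max_eq_right (sub_nonpos.2 (mem_Iio.1 ht).le)]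
    simpa [truncPow, max_eq_right (sub_nonpos.2 hy.le)] using
      (hasDerivAt_const y (0 : ℝ)).congr_of_eventuallyEq h0
  · have hpow : truncPow c (n + 2) =ᶠ[𝓝 y] fun t => (t - c) ^ (n + 2) := by
      filter_upwards [Ioi_mem_nhds hy] with t ht
      simp [truncPow, max_eq_left (sub_nonneg.2 (mem_Ioi.1 ht).le)]
    simpa [truncPow, max_eq_left (sub_nonneg.2 hy.le)] using
      (((hasDerivAt_id y).sub_const c).pow (n + 2)).congr_of_eventuallyEq hpow

lemma hasDerivAt_truncPow (c : ℝ) (n : ℕ) (y : ℝ) :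
    HasDerivAt (truncPow c (n + 2)) ((n + 2) * truncPow c (n + 1) y) y :=
  -- at `y = c` itself, from the continuity of the derivative computed off `c`
  hasDerivAt_of_hasDerivAt_of_ne' (fun _ hy => hasDerivAt_truncPow_of_ne c n hy)
    (continuous_truncPow c _).continuousAt
    ((continuous_const.mul (continuous_truncPow c _)).continuousAt) y

lemma contDiff_truncPow (c : ℝ) : ∀ n : ℕ, ContDiff ℝ n (truncPow c (n + 1))
  | 0 => contDiff_zero.2 (continuous_truncPow c 1)
  | n + 1 => by
    have hderiv : deriv (truncPow c (n + 2)) = fun y => (n + 2) * truncPow c (n + 1) y :=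
      funext fun y => (hasDerivAt_truncPow c n y).deriv
    rw [Nat.cast_succ, contDiff_succ_iff_deriv, hderiv]
    exact ⟨fun y => (hasDerivAt_truncPow c n y).differentiableAt, by simp,
      contDiff_const.mul (contDiff_truncPow c n)⟩

lemma extCubicBSpline_eq_truncPow (a lam : ℝ) {h : ℝ} (hh : 0 < h) (i : ℤ) :
    extCubicBSpline a h lam i = fun x => 1 / (24 * h ^ 4) *
      (4 * h * (1 - lam) * truncPow (knot a h (i - 2)) 3 x
        + 3 * lam * truncPow (knot a h (i - 2)) 4 x
        - 8 * h * (2 + lam) * truncPow (knot a h (i - 1)) 3 x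
        - 6 * lam * truncPow (knot a h (i - 1)) 4 x
        + 24 * h * (1 + lam) * truncPow (knot a h i) 3 x
        - 8 * h * (2 + lam) * truncPow (knot a h (i + 1)) 3 x
        + 6 * lam * truncPow (knot a h (i + 1)) 4 x
        + 4 * h * (1 - lam) * truncPow (knot a h (i + 2)) 3 x
        - 3 * lam * truncPow (knot a h (i + 2)) 4 x) := by
  funext x
  simp only [extCubicBSpline, knot, mem_Icc]
  push_cast
  split_ifs
  · simp (disch := grind) only [truncPow_of_le, truncPow_of_ge]; ring
  · simp (disch := grind) only [truncPow_of_le, truncPow_of_ge]; ring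
  · simp (disch := grind) only [truncPow_of_le, truncPow_of_ge]; ring
  · simp (disch := grind) only [truncPow_of_le, truncPow_of_ge]; ring
  · rcases le_or_gt x (a + (i - 2) * h) with hx | hx
    · simp (disch := grind) only [truncPow_of_le]; ring
    · simp (disch := grind) only [truncPow_of_ge]; ring

/-- The extended cubic B-spline is twice continuously differentiable on ℝ. -/
theorem extCubicBSpline_contDiff (a h lam : ℝ) (hh : 0 < h) (i : ℤ) :
    ContDiff ℝ 2 (extCubicBSpline a h lam i) := by
  have h3 (c : ℝ) : ContDiff ℝ 2 (truncPow c 3) := contDiff_truncPow c 2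
  have h4 (c : ℝ) : ContDiff ℝ 2 (truncPow c 4) := (contDiff_truncPow c 3).of_le (by norm_num)
  rw [extCubicBSpline_eq_truncPow a lam hh i]
  fun_prop
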